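/- arXiv:math/0308247 — 2 statements merged into one kernel-verified Lean document; each statement's English description precedes it below -/
import Mathlib

section
/- Let f ∈ m be reduced, let I be an ideal of R with I^{ea}(f) ⊆ I ⊆ m, set d = dim_ℂ(R/I) (a finite positive integer), and let α ∈ [0,1] be a real number. Then (1+α)²·d ≤ (d+α)², and for every g ∈ I with i(f,g) ≤ 2d one has λ_α(f;I,g) ≤ (d+α)²; consequently γ_α(f;I) ≤ (d+α)². -/
/-- The formal partial derivative `∂f/∂x_i` of a formal power series
`f ∈ ℂ⟦x₀,x₁⟧`, defined coefficientwise: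
`coeff d (∂f/∂x_i) = (d i + 1) · coeff (d + eᵢ) f`. -/
noncomputable def mvPderiv (i : Fin 2) (f : MvPowerSeries (Fin 2) ℂ) :
    MvPowerSeries (Fin 2) ℂ :=
  fun d => ((d i : ℂ) + 1) * f (d + Finsupp.single i 1)

/-- The Tjurina ideal `I^{ea}(f) = ⟨∂f/∂x, ∂f/∂y, f⟩` of `f ∈ ℂ⟦x,y⟧`. -/
noncomputable def tjurinaIdeal (f : MvPowerSeries (Fin 2) ℂ) :
    Ideal (MvPowerSeries (Fin 2) ℂ) :=
  Ideal.span {mvPderiv 0 f, mvPderiv 1 f, f}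

/-- The maximal ideal `m = ⟨x,y⟩` of `R = ℂ⟦x,y⟧`. -/
noncomputable def maxIdealPS : Ideal (MvPowerSeries (Fin 2) ℂ) :=
  Ideal.span {MvPowerSeries.X 0, MvPowerSeries.X 1}

/-- The intersection multiplicity `i(f,g) = dim_ℂ(R/⟨f,g⟩)` (as a natural
number; it is the genuine dimension whenever the quotient is finite
dimensional, which holds in all the situations where it is used below). -/
noncomputable def interMult (f g : MvPowerSeries (Fin 2) ℂ) : ℕ :=
  Module.finrank ℂ
    (MvPowerSeries (Fin 2) ℂ ⧸ Ideal.span ({f, g} : Set (MvPowerSeries (Fin 2) ℂ)))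

/-- `λ_α(f;I,g) = (α·i(f,g) − (1−α)·d)² / (i(f,g) − d)` where `d = dim_ℂ(R/I)`. -/
noncomputable def lambdaAlpha (α : ℝ) (f g : MvPowerSeries (Fin 2) ℂ) (d : ℕ) : ℝ :=
  (α * (interMult f g : ℝ) - (1 - α) * (d : ℝ)) ^ 2 /
    ((interMult f g : ℝ) - (d : ℝ))

/-- The set of values whose maximum defines
`γ_α(f;I) = max{(1+α)²·d, λ_α(f;I,g) : g ∈ I, i(f,g) ≤ 2d}`. -/
noncomputable def gammaSet (α : ℝ) (f : MvPowerSeries (Fin 2) ℂ)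
    (I : Ideal (MvPowerSeries (Fin 2) ℂ)) (d : ℕ) : Set ℝ :=
  {x : ℝ | x = (1 + α) ^ 2 * (d : ℝ) ∨
    ∃ g ∈ I,
      Module.rank ℂ
          (MvPowerSeries (Fin 2) ℂ ⧸
            Ideal.span ({f, g} : Set (MvPowerSeries (Fin 2) ℂ))) ≤
        ((2 * d : ℕ) : Cardinal) ∧
      x = lambdaAlpha α f g d}

private lemma key_ineq (D i α : ℝ) (hD : 1 ≤ D) (hi1 : D + 1 ≤ i) (hi2 : i ≤ 2*D)
    (hα0 : 0 ≤ α) (hα1 : α ≤ 1) :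
    (α * i - (1 - α) * D) ^ 2 ≤ (D + α) ^ 2 * (i - D) := by
  have hα2 : α^2 ≤ 1 := by nlinarith
  have h1 : 0 ≤ (i - D - 1) * (D^2 - α^2*(i-D)) := by
    apply mul_nonneg (by linarith)
    nlinarith [sq_nonneg α]
  have h2 : 0 ≤ 4*(α*(1-α))*(D*((i-D)+D)) := by
    have := mul_nonneg hα0 (by linarith : (0:ℝ) ≤ 1-α)
    have : (0:ℝ) ≤ D*((i-D)+D) := by nlinarith
    positivity
  nlinarith [h1, h2]

/-- Let `f ∈ m` be reduced, let `I` be an ideal of `R = ℂ⟦x,y⟧` with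
`I^{ea}(f) ⊆ I ⊆ m`, set `d = dim_ℂ(R/I)` (a finite positive integer) and let
`α ∈ [0,1]`. Then `(1+α)²·d ≤ (d+α)²`, for every `g ∈ I` with `i(f,g) ≤ 2d`
one has `λ_α(f;I,g) ≤ (d+α)²`, and consequently `γ_α(f;I) ≤ (d+α)²`. -/
theorem stmt_1 (f : MvPowerSeries (Fin 2) ℂ)
    (hfm : f ∈ maxIdealPS) (hf0 : f ≠ 0) (hsq : Squarefree f)
    (I : Ideal (MvPowerSeries (Fin 2) ℂ))
    (hI1 : tjurinaIdeal f ≤ I) (hI2 : I ≤ maxIdealPS)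
    (hfin : FiniteDimensional ℂ (MvPowerSeries (Fin 2) ℂ ⧸ I))
    (d : ℕ) (hd : d = Module.finrank ℂ (MvPowerSeries (Fin 2) ℂ ⧸ I))
    (hdpos : 0 < d)
    (α : ℝ) (hα0 : 0 ≤ α) (hα1 : α ≤ 1) :
    (1 + α) ^ 2 * (d : ℝ) ≤ ((d : ℝ) + α) ^ 2 ∧
    (∀ g ∈ I,
      Module.rank ℂ
          (MvPowerSeries (Fin 2) ℂ ⧸
            Ideal.span ({f, g} : Set (MvPowerSeries (Fin 2) ℂ))) ≤
        ((2 * d : ℕ) : Cardinal) →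
      lambdaAlpha α f g d ≤ ((d : ℝ) + α) ^ 2) ∧
    sSup (gammaSet α f I d) ≤ ((d : ℝ) + α) ^ 2 := by
  have hD1 : (1:ℝ) ≤ (d:ℝ) := by exact_mod_cast hdpos
  have hB : (0:ℝ) ≤ ((d:ℝ) + α) ^ 2 := by positivity
  have hpart1 : (1 + α) ^ 2 * (d : ℝ) ≤ ((d : ℝ) + α) ^ 2 := by
    have hα2 : α^2 ≤ 1 := by nlinarith
    nlinarith [mul_nonneg (by linarith : (0:ℝ) ≤ (d:ℝ) - 1)
      (by linarith : (0:ℝ) ≤ 1 - α^2)]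
  have hpart2 : ∀ g ∈ I,
      Module.rank ℂ
          (MvPowerSeries (Fin 2) ℂ ⧸
            Ideal.span ({f, g} : Set (MvPowerSeries (Fin 2) ℂ))) ≤
        ((2 * d : ℕ) : Cardinal) →
      lambdaAlpha α f g d ≤ ((d : ℝ) + α) ^ 2 := by
    intro g hg hrank
    have hm2d : interMult f g ≤ 2 * d := Module.finrank_le_of_rank_le hrank
    unfold lambdaAlpha
    rcases le_or_gt (interMult f g) d with hmd | hmd
    · refine le_trans ?_ hB
      apply div_nonpos_of_nonneg_of_nonpos (sq_nonneg _)
      have : (interMult f g : ℝ) ≤ (d : ℝ) := by exact_mod_cast hmd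
      linarith
    · have h1 : (d:ℝ) + 1 ≤ (interMult f g : ℝ) := by exact_mod_cast hmd
      have h2 : (interMult f g : ℝ) ≤ 2 * (d:ℝ) := by exact_mod_cast hm2d
      rw [div_le_iff₀ (by linarith)]
      exact key_ineq (d:ℝ) (interMult f g : ℝ) α hD1 h1 h2 hα0 hα1
  refine ⟨hpart1, hpart2, ?_⟩
  apply Real.sSup_le _ hB
  rintro x (rfl | ⟨g, hg, hrank, rfl⟩)
  · exact hpart1
  · exact hpart2 g hg hrank
end

section
/- Let α ∈ (0,1] and M > 0 be real numbers, let s ≥ 1 and let d_1,…,d_s and ε_1,…,ε_s be positive real numbers. Set D = Σ_{i=1}^s d_i and suppose 4D < M² and Σ_{i=1}^s ε_i ≤ (1/α)·( 2D / (M + √(M² − 4D)) )². Then α·M² ≤ Σ_{i=1}^s ( d_i²/ε_i + 2·α·d_i + α²·ε_i ). -/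
open Finset in
/-- The packaged chain of real-number estimates in the proof of the
T-smoothness criterion on a surface with Néron–Severi group generated by an
ample divisor: for `0 < α ≤ 1`, `M > 0`, positive reals `d_1,…,d_s` and
`ε_1,…,ε_s` (`s ≥ 1`), with `D = Σ d_i`, if `4D < M²` and
`Σ ε_i ≤ (1/α)·(2D/(M + √(M² − 4D)))²`, then
`α·M² ≤ Σ (d_i²/ε_i + 2·α·d_i + α²·ε_i)`. -/
theorem stmt_6 (α M : ℝ) (hα0 : 0 < α) (hα1 : α ≤ 1) (hM : 0 < M)
    (s : ℕ) (hs : 1 ≤ s) (d ε : Fin s → ℝ)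
    (hd : ∀ i, 0 < d i) (hε : ∀ i, 0 < ε i)
    (hD : 4 * (∑ i, d i) < M ^ 2)
    (hεsum : ∑ i, ε i ≤
      (1 / α) * (2 * (∑ i, d i) /
        (M + Real.sqrt (M ^ 2 - 4 * (∑ i, d i)))) ^ 2) :
    α * M ^ 2 ≤ ∑ i, (d i ^ 2 / ε i + 2 * α * d i + α ^ 2 * ε i) := by
  have hne : (Finset.univ : Finset (Fin s)).Nonempty := by
    rw [Finset.univ_nonempty_iff]
    exact Fin.pos_iff_nonempty.mp hs
  set D := ∑ i, d i with hDdef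
  set E := ∑ i, ε i with hEdef
  set S := ∑ i, d i ^ 2 / ε i with hSdef
  clear_value D E S
  have hDpos : 0 < D := hDdef ▸ Finset.sum_pos (fun i _ => hd i) hne
  have hEpos : 0 < E := hEdef ▸ Finset.sum_pos (fun i _ => hε i) hne
  -- square root
  set r := Real.sqrt (M ^ 2 - 4 * D) with hrdef
  clear_value r
  have hr0 : 0 ≤ r := hrdef ▸ Real.sqrt_nonneg _
  have hr2 : r ^ 2 = M ^ 2 - 4 * D := hrdef ▸ Real.sq_sqrt (by linarith)
  have hrM : r < M := by nlinarith
  set t := (M - r) / 2 with htdef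
  have ht' : t = (M - r) / 2 := htdef
  clear_value t
  have ht : 0 < t := by rw [ht']; linarith
  have htMr : 2 * D / (M + r) = t := by
    rw [div_eq_iff (by positivity)]
    rw [ht']; nlinarith
  have hMt : M * t = D + t ^ 2 := by rw [ht']; nlinarith
  have htD : t ^ 2 ≤ D := by nlinarith
  have hαE : α * E ≤ t ^ 2 := by
    rw [htMr] at hεsum
    calc α * E ≤ α * ((1/α) * t ^ 2) := by
          exact mul_le_mul_of_nonneg_left hεsum hα0.le
      _ = t ^ 2 := by field_simp
  -- Cauchy–Schwarz: D^2 ≤ S * E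
  have hCS : D ^ 2 ≤ S * E := by
    have key := Finset.sum_mul_sq_le_sq_mul_sq Finset.univ
      (fun i => d i / Real.sqrt (ε i)) (fun i => Real.sqrt (ε i))
    have h1 : ∀ i : Fin s, d i / Real.sqrt (ε i) * Real.sqrt (ε i) = d i := by
      intro i
      rw [div_mul_cancel₀]
      exact (Real.sqrt_pos.mpr (hε i)).ne'
    have h2 : ∀ i : Fin s, (d i / Real.sqrt (ε i)) ^ 2 = d i ^ 2 / ε i := by
      intro i
      rw [div_pow, Real.sq_sqrt (hε i).le]
    have h3 : ∀ i : Fin s, (Real.sqrt (ε i)) ^ 2 = ε i := fun i =>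
      Real.sq_sqrt (hε i).le
    simp only [h1, h2, h3] at key
    rw [hDdef, hSdef, hEdef]
    exact key
  have hSge : D ^ 2 / E ≤ S := (div_le_iff₀ hEpos).mpr hCS
  have hsum : ∑ i, (d i ^ 2 / ε i + 2 * α * d i + α ^ 2 * ε i)
      = S + 2 * α * D + α ^ 2 * E := by
    rw [hSdef, hDdef, hEdef]
    simp [Finset.sum_add_distrib, Finset.mul_sum]
  rw [hsum]
  have hkey : α * M ^ 2 ≤ D ^ 2 / E + 2 * α * D + α ^ 2 * E := by
    rw [← sub_le_iff_le_add, ← sub_le_iff_le_add, le_div_iff₀ hEpos]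
    have h1 : 0 ≤ (t ^ 2 - α * E) * (D ^ 2 - α * E * t ^ 2) :=
      mul_nonneg (sub_nonneg.2 hαE) (by nlinarith)
    have hM2 : (M * t) ^ 2 = (D + t ^ 2) ^ 2 := by rw [hMt]
    have ht2 : (0:ℝ) < t ^ 2 := pow_pos ht 2
    have hz : α * E * ((D + t ^ 2) ^ 2 - (M * t) ^ 2) = 0 := by
      rw [hM2]; ring
    have hiden : D ^ 2 * t ^ 2 - (α * M ^ 2 - α ^ 2 * E - 2 * α * D) * E * t ^ 2
        = (t ^ 2 - α * E) * (D ^ 2 - α * E * t ^ 2)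
          + α * E * ((D + t ^ 2) ^ 2 - (M * t) ^ 2) := by ring
    have hmul : (α * M ^ 2 - α ^ 2 * E - 2 * α * D) * E * t ^ 2
        ≤ D ^ 2 * t ^ 2 := by linarith
    exact le_of_mul_le_mul_right hmul ht2
  linarith
end
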